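/- Let p be a prime. Any nonzero function f: ℤ/pℤ → ℂ with |supp(f)| = k+1 has Fourier transform vanishing at most at k points, i.e., |{ξ : f̂(ξ) = 0}| ≤ k. -/

import Mathlib

open Complex

noncomputable def dft {p : ℕ} [NeZero p] (f : ZMod p → ℂ) (ξ : ZMod p) : ℂ :=
  (p : ℂ)⁻¹ * ∑ x : ZMod p, f x * Complex.exp (-2 * Real.pi * Complex.I * ((x.val : ℂ) * (ξ.val : ℂ)) / p)

open Polynomial Matrix


/-- In `𝔽_p[X]`, a polynomial supported on exponents `< p` that is divisible by
`(X-1)^(number of terms)` must be zero. -/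
lemma few_terms_not_dvd (p : ℕ) (hp : p.Prime) (s : Finset ℕ) (hs : ∀ i ∈ s, i < p)
    (c : ℕ → ZMod p)
    (hdvd : ((X : (ZMod p)[X]) - 1) ^ s.card ∣ ∑ i ∈ s, C (c i) * X ^ i) :
    ∀ i ∈ s, c i = 0 := by
  haveI : Fact p.Prime := ⟨hp⟩
  induction s using Finset.strongInduction generalizing c with
  | _ s ih =>
    rcases s.eq_empty_or_nonempty with rfl | hne
    · simp
    set m := s.max' hne with hm
    have hms : m ∈ s := s.max'_mem hne
    set D : (ZMod p)[X] := ∑ i ∈ s, C (c i) * X ^ i with hD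
    -- the "twisted derivative"
    set G : (ZMod p)[X] := C (m : ZMod p) * D - X * derivative D with hG
    have hGsum : G = ∑ i ∈ s.erase m, C (((m : ZMod p) - (i : ZMod p)) * c i) * X ^ i := by
      rw [Finset.sum_erase _ (by simp)]
      rw [hG, hD, derivative_sum, Finset.mul_sum, Finset.mul_sum]
      rw [← Finset.sum_sub_distrib]
      refine Finset.sum_congr rfl fun i hi => ?_
      rw [derivative_C_mul_X_pow]
      rcases Nat.eq_zero_or_pos i with rfl | hipos
      · simp [mul_comm]
      · have hx : (X:(ZMod p)[X]) ^ (i-1) * X = X ^ i := by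
          rw [← pow_succ, Nat.sub_add_cancel hipos]
        rw [show (X:(ZMod p)[X]) * (C (c i * (i:ZMod p)) * X ^ (i - 1)) =
          C (c i * (i:ZMod p)) * (X ^ (i-1) * X) by ring, hx]
        simp only [_root_.map_sub, _root_.map_mul]
        ring
    obtain ⟨E, hE⟩ := hdvd
    have hcard : s.card = (s.erase m).card + 1 := (Finset.card_erase_add_one hms).symm
    have hdvdG : ((X : (ZMod p)[X]) - 1) ^ (s.erase m).card ∣ G := by
      refine ⟨C (m : ZMod p) * (X - 1) * E -
        X * (C (((s.erase m).card + 1 : ℕ) : ZMod p) * E + (X - 1) * derivative E), ?_⟩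
      rw [hG, hE, hcard, derivative_mul, derivative_pow, derivative_sub, derivative_X,
        derivative_one]
      push_cast
      ring
    have hzero : ∀ i ∈ s.erase m, ((m : ZMod p) - (i : ZMod p)) * c i = 0 := by
      intro i hi
      refine ih (s.erase m) (s.erase_ssubset hms)
        (fun j hj => hs j (Finset.mem_of_mem_erase hj))
        (fun i => ((m:ZMod p) - (i:ZMod p)) * c i) ?_ i hi
      rw [← hGsum]
      exact hdvdG
    have hczero : ∀ i ∈ s.erase m, c i = 0 := by
      intro i hi
      have him : i ≠ m := Finset.ne_of_mem_erase hi
      have h1 : ((m : ZMod p) - (i : ZMod p)) ≠ 0 := by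
        intro h
        apply him
        have : (i : ZMod p) = (m : ZMod p) := by linear_combination -h
        have := congrArg ZMod.val this
        rwa [ZMod.val_cast_of_lt (hs i (Finset.mem_of_mem_erase hi)),
          ZMod.val_cast_of_lt (hs m hms)] at this
      have := hzero i hi
      exact (mul_eq_zero.mp this).resolve_left h1
    -- now evaluate at 1
    have heval : D.eval 1 = ∑ i ∈ s, c i := by
      rw [hD, eval_finset_sum]; simp
    have hdvd1 : ((X : (ZMod p)[X]) - 1) ∣ D := by
      refine dvd_trans ?_ ⟨E, hE⟩
      exact dvd_pow_self _ (by omega)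
    have hD1 : D.eval 1 = 0 := by
      obtain ⟨E₂, hE₂⟩ := hdvd1
      rw [hE₂]; simp
    have hsum : ∑ i ∈ s, c i = c m := by
      rw [← Finset.add_sum_erase _ _ hms, Finset.sum_eq_zero hczero, add_zero]
    have hcm : c m = 0 := by rw [← hsum, ← heval, hD1]
    intro i hi
    rcases eq_or_ne i m with rfl | him
    · exact hcm
    · exact hczero i (Finset.mem_erase.mpr ⟨him, hi⟩)


lemma prod_X_sub_C_dvd_of_roots {R : Type*} [CommRing R] [IsDomain R] {ι : Type*} [DecidableEq ι]
    (s : Finset ι) (r : ι → R) (hr : Set.InjOn r s) (D : R[X])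
    (hroot : ∀ j ∈ s, D.eval (r j) = 0) :
    (∏ j ∈ s, (X - C (r j))) ∣ D := by
  induction s using Finset.induction with
  | empty => simp
  | @insert j s' hj ih =>
    obtain ⟨E, hE⟩ := ih (hr.mono (by simp [Finset.subset_insert]))
      (fun i hi => hroot i (Finset.mem_insert_of_mem hi))
    have hEj : E.eval (r j) = 0 := by
      have h0 := hroot j (Finset.mem_insert_self j s')
      rw [hE, eval_mul, eval_prod] at h0
      have hne : (∏ i ∈ s', ((r j) - r i)) ≠ 0 := by
        refine Finset.prod_ne_zero_iff.mpr fun i hi => ?_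
        intro h
        exact hj (by rwa [hr (Finset.mem_insert_of_mem hi) (Finset.mem_insert_self j s')
          (by linear_combination -h)] at hi)
      simp only [eval_sub, eval_X, eval_C] at h0
      exact (mul_eq_zero.mp h0).resolve_left hne
    obtain ⟨F, hF⟩ := (dvd_iff_isRoot.mpr hEj : (X - C (r j)) ∣ E)
    refine ⟨F, ?_⟩
    rw [Finset.prod_insert hj, hE, hF]
    ring


theorem cheb_det_ne_zero (p : ℕ) (hp : p.Prime) (ω : ℂ) (hω : IsPrimitiveRoot ω p)
    {n : ℕ} (x ξ : Fin n → ℕ) (hxlt : ∀ i, x i < p) (hξlt : ∀ j, ξ j < p)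
    (hxinj : Function.Injective x) (hξinj : Function.Injective ξ) :
    (Matrix.of fun i j : Fin n => ω ^ (x i * ξ j)).det ≠ 0 := by
  classical
  haveI : Fact p.Prime := ⟨hp⟩
  intro hdet
  set Φ := cyclotomic p ℤ with hΦ
  have hirr : Irreducible Φ := cyclotomic.irreducible hp.pos
  have hΦprime : Prime Φ := hirr.prime
  haveI : IsDomain (AdjoinRoot Φ) := AdjoinRoot.isDomain_of_prime hΦprime
  haveI : WfDvdMonoid (AdjoinRoot Φ) := IsNoetherianRing.wfDvdMonoid
  set θ : AdjoinRoot Φ := AdjoinRoot.root Φ with hθ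
  -- the evaluation map to ℂ
  have hωroot : Polynomial.eval₂ (Int.castRingHom ℂ) ω Φ = 0 := by
    have h1 : IsRoot (cyclotomic p ℂ) ω := hω.isRoot_cyclotomic hp.pos
    rw [eval₂_eq_eval_map, hΦ, map_cyclotomic_int]; exact h1
  set φ : AdjoinRoot Φ →+* ℂ := AdjoinRoot.lift (Int.castRingHom ℂ) ω hωroot with hφ
  have hφθ : φ θ = ω := AdjoinRoot.lift_root hωroot
  have hφinj : Function.Injective φ := by
    rw [injective_iff_map_eq_zero]
    intro a ha
    obtain ⟨g, rfl⟩ := AdjoinRoot.mk_surjective a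
    rw [hφ, AdjoinRoot.lift_mk] at ha
    have hint : IsIntegral ℤ ω := hω.isIntegral hp.pos
    have hdvd : minpoly ℤ ω ∣ g := minpoly.isIntegrallyClosed_dvd hint (by rwa [aeval_def])
    rw [← cyclotomic_eq_minpoly hω hp.pos] at hdvd
    exact AdjoinRoot.mk_eq_zero.mpr hdvd
  -- the reduction map to ZMod p
  have h1root : Polynomial.eval₂ (Int.castRingHom (ZMod p)) 1 Φ = 0 := by
    rw [eval₂_eq_eval_map, eval_one_map, hΦ, eval_one_cyclotomic_prime]
    simp
  set π : AdjoinRoot Φ →+* ZMod p := AdjoinRoot.lift (Int.castRingHom (ZMod p)) 1 h1root with hπ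
  have hπθ : π θ = 1 := AdjoinRoot.lift_root h1root
  have hπmk : ∀ g : ℤ[X], π (AdjoinRoot.mk Φ g) = ((g.eval 1 : ℤ) : ZMod p) := by
    intro g
    rw [hπ, AdjoinRoot.lift_mk, eval₂_eq_eval_map, eval_one_map]
    simp
  -- `θ - 1` facts
  have hωne1 : ω ≠ 1 := hω.ne_one hp.one_lt
  have htne : (θ - 1 : AdjoinRoot Φ) ≠ 0 := by
    intro h
    apply hωne1
    have := congrArg φ h
    rw [_root_.map_sub, _root_.map_one, hφθ, _root_.map_zero, sub_eq_zero] at this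
    exact this
  have hker : ∀ a : AdjoinRoot Φ, π a = 0 → (θ - 1) ∣ a := by
    intro a ha
    obtain ⟨g, rfl⟩ := AdjoinRoot.mk_surjective a
    rw [hπmk] at ha
    obtain ⟨m, hm⟩ := (ZMod.intCast_zmod_eq_zero_iff_dvd _ p).mp ha
    have h1 : (θ - 1) ∣ AdjoinRoot.mk Φ (g - C (g.eval 1)) := by
      have h2 := map_dvd (AdjoinRoot.mk Φ) (Polynomial.X_sub_C_dvd_sub_C_eval (a := (1:ℤ)) (p := g))
      simpa [hθ] using h2
    have hp1 : (θ - 1) ∣ AdjoinRoot.mk Φ (C ((p : ℤ))) := by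
      have hdl : (X - C (1:ℤ)) ∣ (Φ - C (Φ.eval 1)) := X_sub_C_dvd_sub_C_eval
      have h2 := map_dvd (AdjoinRoot.mk Φ) hdl
      simp only [_root_.map_sub] at h2
      rw [AdjoinRoot.mk_self, zero_sub, dvd_neg] at h2
      rw [show eval 1 Φ = ((p:ℤ)) from by rw [hΦ, eval_one_cyclotomic_prime]] at h2
      simpa [hθ, AdjoinRoot.mk_X, Polynomial.C_1] using h2
    have hsplit : AdjoinRoot.mk Φ g
        = AdjoinRoot.mk Φ (g - C (g.eval 1)) + AdjoinRoot.mk Φ (C (g.eval 1)) := by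
      rw [← map_add, sub_add_cancel]
    rw [hsplit]
    refine dvd_add h1 ?_
    rw [hm, _root_.map_mul, _root_.map_mul (AdjoinRoot.mk Φ)]
    exact Dvd.dvd.mul_right hp1 _
  have hkerEq : RingHom.ker π = Ideal.span {θ - 1} := by
    ext a
    rw [Ideal.mem_span_singleton, RingHom.mem_ker]
    constructor
    · exact hker a
    · rintro ⟨b, rfl⟩
      rw [_root_.map_mul, _root_.map_sub, _root_.map_one, hπθ, sub_self, zero_mul]
  have hprime : Prime (θ - 1) := by
    rw [← Ideal.span_singleton_prime htne, ← hkerEq]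
    exact RingHom.ker_isPrime π
  -- matrices
  set N : Matrix (Fin n) (Fin n) (AdjoinRoot Φ) := Matrix.of (fun i j => θ ^ (x i * ξ j)) with hN
  have hdetN : N.det = 0 := by
    apply hφinj
    rw [_root_.map_zero, RingHom.map_det, RingHom.mapMatrix_apply]
    have hmapN : N.map φ = Matrix.of fun i j : Fin n => ω ^ (x i * ξ j) := by
      ext i j
      simp [hN, _root_.map_pow, hφθ]
    rw [hmapN, hdet]
  obtain ⟨v, hv0, hvN⟩ := Matrix.exists_vecMul_eq_zero_iff.mpr hdetN
  -- the main step: a kernel vector cannot have a unit coordinate mod (θ - 1)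
  have main : ∀ a : Fin n → AdjoinRoot Φ, a ᵥ* N = 0 → (∃ i, π (a i) ≠ 0) → False := by
    rintro a hvec ⟨i₀, hi₀⟩
    set D : (AdjoinRoot Φ)[X] := ∑ i, C (a i) * X ^ (x i) with hD
    have hreval : ∀ j : Fin n, D.eval (θ ^ ξ j) = 0 := by
      intro j
      have hvj : (∑ i', a i' * N i' j) = 0 := congrFun hvec j
      rw [hD, eval_finset_sum]
      simp only [eval_mul, eval_C, eval_pow, eval_X]
      rw [← hvj]
      refine Finset.sum_congr rfl fun i _ => ?_
      rw [← pow_mul, mul_comm (ξ j) (x i)]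
      rfl
    have hrinj : Set.InjOn (fun j : Fin n => θ ^ ξ j) (Finset.univ : Finset (Fin n)) := by
      intro j _ j' _ h
      apply hξinj
      refine hω.pow_inj (hξlt j) (hξlt j') ?_
      have := congrArg φ h
      simpa [_root_.map_pow, hφθ] using this
    have hdvdD := prod_X_sub_C_dvd_of_roots Finset.univ _ hrinj D (fun j _ => hreval j)
    have hmapdvd := map_dvd (Polynomial.mapRingHom π) hdvdD
    rw [Polynomial.coe_mapRingHom] at hmapdvd
    have hprodmap : (∏ j : Fin n, ((X : (AdjoinRoot Φ)[X]) - C (θ ^ ξ j))).map π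
        = ((X : (ZMod p)[X]) - 1) ^ n := by
      rw [Polynomial.map_prod]
      have : ∀ j : Fin n, ((X : (AdjoinRoot Φ)[X]) - C (θ ^ ξ j)).map π
          = ((X : (ZMod p)[X]) - 1) := by
        intro j
        rw [Polynomial.map_sub, Polynomial.map_X, Polynomial.map_C, _root_.map_pow, hπθ, one_pow, _root_.map_one]
      rw [Finset.prod_congr rfl (fun j _ => this j), Finset.prod_const, Finset.card_univ,
        Fintype.card_fin]
    rw [hprodmap] at hmapdvd
    -- identify the mapped polynomial as a sum over the image finset
    set c : ℕ → ZMod p := fun e => if h : ∃ i, x i = e then π (a h.choose) else 0 with hc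
    have hcx : ∀ i, c (x i) = π (a i) := by
      intro i
      have hex : ∃ i', x i' = x i := ⟨i, rfl⟩
      rw [hc]
      simp only [dif_pos hex]
      exact congrArg (fun z => π (a z)) (hxinj hex.choose_spec)
    have hDmap : D.map π = ∑ e ∈ Finset.image x Finset.univ, C (c e) * (X : (ZMod p)[X]) ^ e := by
      rw [Finset.sum_image (fun i _ j _ h => hxinj h)]
      rw [hD, ← Polynomial.coe_mapRingHom, map_sum]
      refine Finset.sum_congr rfl fun i _ => ?_
      rw [Polynomial.coe_mapRingHom, Polynomial.map_mul, Polynomial.map_C, Polynomial.map_pow,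
        Polynomial.map_X, hcx]
    have hcard : (Finset.image x Finset.univ).card = n := by
      rw [Finset.card_image_of_injective _ hxinj, Finset.card_univ, Fintype.card_fin]
    have hzero := few_terms_not_dvd p hp (Finset.image x Finset.univ)
      (by rintro e he; obtain ⟨i, _, rfl⟩ := Finset.mem_image.mp he; exact hxlt i) c
      (by rw [hcard, ← hDmap]; exact hmapdvd)
    have := hzero (x i₀) (Finset.mem_image_of_mem x (Finset.mem_univ i₀))
    rw [hcx] at this
    exact hi₀ this
  -- descent on powers of (θ - 1)
  have descent : ∀ e : ℕ, ∀ a : Fin n → AdjoinRoot Φ, a ᵥ* N = 0 →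
      ∀ i, a i ≠ 0 → ¬ ((θ - 1) ^ e ∣ a i) → False := by
    intro e
    induction e with
    | zero => intro a _ i _ hnd; exact hnd (by rw [pow_zero]; exact one_dvd _)
    | succ e ihe =>
      intro a hvec i hai hnd
      by_cases hex : ∃ i', π (a i') ≠ 0
      · exact main a hvec hex
      · push_neg at hex
        have hdvdall : ∀ i', (θ - 1) ∣ a i' := fun i' => hker _ (hex i')
        choose b hb using hdvdall
        refine ihe b ?_ i ?_ ?_
        · funext j
          have hvj : (∑ i', a i' * N i' j) = 0 := congrFun hvec j
          have : (θ - 1) * ∑ i', b i' * N i' j = 0 := by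
            rw [Finset.mul_sum, ← hvj]
            refine Finset.sum_congr rfl fun i' _ => ?_
            rw [hb i']
            ring
          have h2 := (mul_eq_zero.mp this).resolve_left htne
          show (∑ i', b i' * N i' j) = 0
          exact h2
        · intro h0
          exact hai (by rw [hb i, h0, mul_zero])
        · intro hd
          apply hnd
          rw [hb i, pow_succ']
          exact mul_dvd_mul_left _ hd
  obtain ⟨i, hi⟩ := Function.ne_iff.mp hv0
  obtain ⟨m, b, hbnd, hvb⟩ := WfDvdMonoid.max_power_factor hi hprime.irreducible
  refine descent (m + 1) v hvN i hi ?_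
  rw [hvb, pow_succ]
  intro hdd
  exact hbnd ((mul_dvd_mul_iff_left (pow_ne_zero m htne)).mp hdd)


theorem sparse_support_few_fourier_zeroes
    (p : ℕ) (hp : p.Prime) [NeZero p] (k : ℕ)
    (f : ZMod p → ℂ) (hf : f ≠ 0) (hsupp : (Function.support f).ncard = k + 1) :
    {ξ : ZMod p | dft f ξ = 0}.ncard ≤ k := by
  classical
  by_contra hcon
  push_neg at hcon
  set n := k + 1 with hn
  have hppos : p ≠ 0 := NeZero.ne p
  have hpC : (p : ℂ) ≠ 0 := Nat.cast_ne_zero.mpr hppos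
  -- support finset
  have hfin : (Function.support f).Finite := Set.toFinite _
  have hScard : hfin.toFinset.card = n := by
    rw [← Set.ncard_eq_toFinset_card _ hfin]; exact hsupp
  -- zero set finset
  have hzfin : ({ξ : ZMod p | dft f ξ = 0}).Finite := Set.toFinite _
  have hzcard : n ≤ hzfin.toFinset.card := by
    rw [← Set.ncard_eq_toFinset_card _ hzfin]; omega
  obtain ⟨T, hTsub, hTcard⟩ := Finset.exists_subset_card_eq hzcard
  -- enumerations
  set eS : Fin n ≃ {v // v ∈ hfin.toFinset} := (Finset.equivFinOfCardEq hScard).symm with heS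
  set eT : Fin n ≃ {v // v ∈ T} := (Finset.equivFinOfCardEq hTcard).symm with heT
  set xv : Fin n → ℕ := fun i => ((eS i : ZMod p)).val with hxv
  set ξv : Fin n → ℕ := fun j => ((eT j : ZMod p)).val with hξv
  have hxvinj : Function.Injective xv := fun i j h =>
    eS.injective (Subtype.ext (ZMod.val_injective p h))
  have hξvinj : Function.Injective ξv := fun i j h =>
    eT.injective (Subtype.ext (ZMod.val_injective p h))
  -- the primitive root
  set ω : ℂ := Complex.exp (2 * Real.pi * Complex.I / p) with hωdef
  have hω : IsPrimitiveRoot ω p := Complex.isPrimitiveRoot_exp p hppos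
  set ζ : ℂ := ω⁻¹ with hζdef
  have hζ : IsPrimitiveRoot ζ p := hω.inv
  have hζexp : ζ = Complex.exp (-(2 * Real.pi * Complex.I / p)) := by
    rw [hζdef, hωdef, ← Complex.exp_neg]
  have hexp : ∀ a b : ℕ,
      Complex.exp (-2 * Real.pi * Complex.I * ((a : ℂ) * (b : ℂ)) / p) = ζ ^ (a * b) := by
    intro a b
    rw [hζexp, ← Complex.exp_nat_mul]
    congr 1
    push_cast
    ring
  -- the matrix and kernel vector
  set M : Matrix (Fin n) (Fin n) ℂ := Matrix.of (fun i j => ζ ^ (xv i * ξv j)) with hM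
  set c : Fin n → ℂ := fun i => f (eS i : ZMod p) with hc
  have hc0 : c ≠ 0 := by
    intro h
    have h0 := congrFun h ⟨0, by omega⟩
    have hmem := (eS ⟨0, by omega⟩).2
    rw [Set.Finite.mem_toFinset] at hmem
    exact hmem h0
  have hvec : c ᵥ* M = 0 := by
    funext j
    show (∑ i, c i * M i j) = 0
    have hjz : dft f (eT j : ZMod p) = 0 := by
      have hmem := hTsub (eT j).2
      rw [Set.Finite.mem_toFinset] at hmem
      exact hmem
    rw [dft, mul_eq_zero] at hjz
    have hsum0 := hjz.resolve_left (inv_ne_zero hpC)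
    have hsum0' : ∑ v : ZMod p, f v * ζ ^ (v.val * (eT j : ZMod p).val) = 0 := by
      rw [← hsum0]
      exact Finset.sum_congr rfl fun v _ => by rw [hexp]
    have hres : ∑ v ∈ hfin.toFinset, f v * ζ ^ (v.val * (eT j : ZMod p).val) = 0 := by
      rw [← hsum0']
      refine Finset.sum_subset (Finset.subset_univ _) fun v _ hv => ?_
      rw [Set.Finite.mem_toFinset] at hv
      rw [Function.notMem_support.mp hv, zero_mul]
    calc ∑ i, c i * M i j
        = ∑ v ∈ hfin.toFinset, f v * ζ ^ (v.val * (eT j : ZMod p).val) := by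
          rw [← Finset.sum_coe_sort hfin.toFinset
            (fun v => f v * ζ ^ ((v : ZMod p).val * (eT j : ZMod p).val))]
          exact (Equiv.sum_comp eS
            (fun v => f (v : ZMod p) * ζ ^ ((v : ZMod p).val * (eT j : ZMod p).val)))
      _ = 0 := hres
  have hdet : M.det = 0 := Matrix.exists_vecMul_eq_zero_iff.mp ⟨c, hc0, hvec⟩
  exact cheb_det_ne_zero p hp ζ hζ xv ξv (fun i => ZMod.val_lt _) (fun j => ZMod.val_lt _)
    hxvinj hξvinj hdet
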